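/- (Scaling estimate for Gaussian Vandermonde moments.) Let n ≥ 1, a > 0, η > 0 and α = (α_1,…,α_n) ∈ ℕ^n with |α| := α_1+⋯+α_n. Then there exists C > 0 such that for all real N ≥ 1: | ∫_{[−η,η]^n} Δ_n(t)² · ∏_{l=1}^n t_l^{α_l} · e^{−N a t_l²} dt | ≤ C · N^{−(n² + |α|)/2}. -/

import Mathlib

open MeasureTheory Finset

/-- The Vandermonde product for a real tuple. -/
noncomputable def vandR {n : ℕ} (z : Fin n → ℝ) : ℝ :=
  ∏ j : Fin n, ∏ k ∈ Finset.Ioi j, (z k - z j)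

/-!
Substituting `t = s / √N` turns the weight `e^{-N a t²}` into `e^{-a s²}`. The factor `Δ_n(t)²`
is homogeneous of degree `n(n-1)`, the monomial of degree `|α|`, and `dt` contributes `N^{-n/2}`,
so the integral is `N^{-(n² + |α|)/2}` times the integral over the dilated cube `[-√N η, √N η]ⁿ`
of one fixed function, polynomial times Gaussian. That function is integrable on all of `ℝⁿ`,
so the remaining integral is bounded uniformly in `N`.
-/

theorem Fin.sum_card_Ioi (n : ℕ) : ∑ j : Fin n, #(Ioi j) = n.choose 2 := by
  simp_rw [Fin.card_Ioi]
  rw [Fin.sum_univ_eq_sum_range (fun j => n - 1 - j), sum_range_reflect (fun j => j) n,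
    sum_range_id, Nat.choose_two_right]

theorem Nat.two_mul_choose_two_add_self (n : ℕ) : 2 * n.choose 2 + n = n ^ 2 := by
  rw [Nat.choose_two_right, Nat.mul_div_cancel' n.even_mul_pred_self.two_dvd]
  cases n with
  | zero => rfl
  | succ m => simp only [Nat.add_sub_cancel]; ring

theorem vandR_smul {n : ℕ} (c : ℝ) (z : Fin n → ℝ) :
    vandR (c • z) = c ^ n.choose 2 * vandR z := by
  simp only [vandR, Pi.smul_apply, smul_eq_mul, ← mul_sub, prod_mul_distrib, prod_const,
    prod_pow_eq_pow_sum, Fin.sum_card_Ioi]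

theorem abs_le_prod_one_add_abs {ι : Type*} [Fintype ι] (s : ι → ℝ) (j : ι) :
    |s j| ≤ ∏ l, (1 + |s l|) :=
  calc |s j| ≤ ∏ l ∈ {j}, (1 + |s l|) := by simp
    _ ≤ ∏ l, (1 + |s l|) := prod_le_prod_of_subset_of_one_le (subset_univ _)
        (fun l _ => by positivity) (fun l _ _ => by simp)

theorem abs_vandR_le {n : ℕ} (z : Fin n → ℝ) :
    |vandR z| ≤ (2 * ∏ l, (1 + |z l|)) ^ n.choose 2 := by
  have hdiff (j k : Fin n) : |z k - z j| ≤ 2 * ∏ l, (1 + |z l|) := by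
    linarith [abs_sub (z k) (z j), abs_le_prod_one_add_abs z k, abs_le_prod_one_add_abs z j]
  calc |vandR z| = ∏ j, ∏ k ∈ Ioi j, |z k - z j| := by simp only [vandR, abs_prod]
    _ ≤ ∏ j : Fin n, ∏ k ∈ Ioi j, 2 * ∏ l, (1 + |z l|) := by
        gcongr with j _ k _; exact hdiff j k
    _ = (2 * ∏ l, (1 + |z l|)) ^ n.choose 2 := by
        rw [← Fin.sum_card_Ioi, ← prod_pow_eq_pow_sum]; simp only [prod_const]

theorem integrable_one_add_abs_pow_mul_exp_neg_mul_sq (m : ℕ) {b : ℝ} (hb : 0 < b) :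
    Integrable fun x : ℝ => (1 + |x|) ^ m * Real.exp (-b * x ^ 2) := by
  have habs (k : ℕ) : Integrable fun x : ℝ => |x| ^ k * Real.exp (-b * x ^ 2) := by
    have := (integrable_rpow_mul_exp_neg_mul_sq hb (neg_one_lt_zero.trans_le k.cast_nonneg)).norm
    simpa [Real.rpow_natCast, abs_mul, abs_pow] using this
  simp_rw [add_comm (1 : ℝ), add_pow, one_pow, mul_one, sum_mul]
  exact integrable_finsetSum _ fun k _ => by
    simpa only [mul_right_comm] using (habs k).mul_const (m.choose k : ℝ)

noncomputable def vandermondeGaussian {n : ℕ} (α : Fin n → ℕ) (b : ℝ) (t : Fin n → ℝ) : ℝ :=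
  vandR t ^ 2 * ∏ l, t l ^ α l * Real.exp (-b * t l ^ 2)

section vandermondeGaussian

variable {n : ℕ} (α : Fin n → ℕ)

theorem continuous_vandermondeGaussian (b : ℝ) : Continuous (vandermondeGaussian α b) := by
  unfold vandermondeGaussian vandR
  fun_prop

theorem vandermondeGaussian_smul (b c : ℝ) (t : Fin n → ℝ) :
    vandermondeGaussian α b (c • t) =
      c ^ (2 * n.choose 2 + ∑ l, α l) * vandermondeGaussian α (c ^ 2 * b) t := by
  have hfactor (l : Fin n) : (c * t l) ^ α l * Real.exp (-b * (c * t l) ^ 2) =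
      c ^ α l * (t l ^ α l * Real.exp (-(c ^ 2 * b) * t l ^ 2)) := by
    ring_nf
  simp only [vandermondeGaussian, vandR_smul, Pi.smul_apply, smul_eq_mul, hfactor,
    prod_mul_distrib, prod_pow_eq_pow_sum]
  ring

theorem abs_vandermondeGaussian_le (b : ℝ) (s : Fin n → ℝ) :
    |vandermondeGaussian α b s| ≤ 2 ^ (2 * n.choose 2 + ∑ l, α l) *
      ∏ l, ((1 + |s l|) ^ (2 * n.choose 2 + ∑ l, α l) * Real.exp (-b * s l ^ 2)) := by
  set R := 2 * ∏ l, (1 + |s l|)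
  have hmonomial : ∏ l, |s l| ^ α l ≤ R ^ ∑ l, α l := by
    rw [← prod_pow_eq_pow_sum]
    gcongr with l
    have : 0 ≤ ∏ l, (1 + |s l|) := by positivity
    linarith [abs_le_prod_one_add_abs s l]
  calc |vandermondeGaussian α b s|
      = |vandR s| ^ 2 * ((∏ l, |s l| ^ α l) * ∏ l, Real.exp (-b * s l ^ 2)) := by
        simp only [vandermondeGaussian, abs_mul, abs_pow, sq_abs, abs_prod, Real.abs_exp,
          prod_mul_distrib]
    _ ≤ (R ^ n.choose 2) ^ 2 * ((R ^ ∑ l, α l) * ∏ l, Real.exp (-b * s l ^ 2)) := by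
        gcongr
        exact abs_vandR_le s
    _ = _ := by
        rw [← pow_mul, mul_comm (n.choose 2), ← mul_assoc, ← pow_add, mul_pow, ← prod_pow,
          mul_assoc, ← prod_mul_distrib]

theorem integrable_vandermondeGaussian {b : ℝ} (hb : 0 < b) :
    Integrable (vandermondeGaussian α b) :=
  ((Integrable.fintype_prod fun _ =>
      integrable_one_add_abs_pow_mul_exp_neg_mul_sq _ hb).const_mul _).mono'
    (continuous_vandermondeGaussian α b).aestronglyMeasurable
    (ae_of_all _ fun s => abs_vandermondeGaussian_le α b s)

open scoped Pointwise in
theorem setIntegral_vandermondeGaussian_sq_mul (b : ℝ) {c : ℝ} (hc : 0 < c)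
    (S : Set (Fin n → ℝ)) :
    ∫ t in S, vandermondeGaussian α (c ^ 2 * b) t =
      (c ^ (n ^ 2 + ∑ l, α l))⁻¹ * ∫ s in c • S, vandermondeGaussian α b s := by
  have hrescale (t : Fin n → ℝ) : vandermondeGaussian α (c ^ 2 * b) t =
      (c ^ (2 * n.choose 2 + ∑ l, α l))⁻¹ * vandermondeGaussian α b (c • t) := by
    rw [vandermondeGaussian_smul, inv_mul_cancel_left₀ (pow_pos hc _).ne']
  simp_rw [hrescale]
  rw [integral_const_mul, Measure.setIntegral_comp_smul_of_pos _ _ _ hc, Module.finrank_fin_fun,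
    smul_eq_mul, ← mul_assoc, ← mul_inv, ← pow_add, add_right_comm,
    Nat.two_mul_choose_two_add_self]

end vandermondeGaussian

theorem inv_sqrt_pow_eq_rpow {x : ℝ} (hx : 0 ≤ x) (k : ℕ) :
    (√x ^ k)⁻¹ = x ^ (-(k : ℝ) / 2) := by
  rw [Real.sqrt_eq_rpow, ← Real.rpow_natCast, ← Real.rpow_mul hx, ← Real.rpow_neg hx]
  ring_nf

theorem gaussian_vandermonde_moment_estimate_general
    (n : ℕ) (a η : ℝ) (ha : 0 < a) (α : Fin n → ℕ) :
    ∃ C > (0 : ℝ), ∀ N : ℝ, 1 ≤ N →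
      |∫ t in Set.univ.pi (fun _ : Fin n => Set.Icc (-η) η),
          vandR t ^ 2 * ∏ l, (t l) ^ (α l) * Real.exp (-N * a * (t l) ^ 2)| ≤
        C * N ^ (-(((n ^ 2 : ℕ) : ℝ) + ((∑ l, α l : ℕ) : ℝ)) / 2) := by
  refine ⟨(∫ s, |vandermondeGaussian α a s|) + 1, by positivity, fun N hN => ?_⟩
  have hN : 0 < N := by linarith
  have hintegrand : (fun t => vandR t ^ 2 * ∏ l, t l ^ α l * Real.exp (-N * a * t l ^ 2)) =
      vandermondeGaussian α (√N ^ 2 * a) := by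
    funext t
    simp [vandermondeGaussian, Real.sq_sqrt hN.le]
  rw [hintegrand, setIntegral_vandermondeGaussian_sq_mul α a (Real.sqrt_pos.2 hN), abs_mul,
    abs_of_pos (by positivity), inv_sqrt_pow_eq_rpow hN.le, mul_comm]
  push_cast
  gcongr
  calc |∫ s in _, vandermondeGaussian α a s| ≤ ∫ s in _, |vandermondeGaussian α a s| :=
        abs_integral_le_integral_abs
    _ ≤ ∫ s, |vandermondeGaussian α a s| :=
        setIntegral_le_integral (integrable_vandermondeGaussian α ha).abs
          (ae_of_all _ fun _ => abs_nonneg _)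
    _ ≤ _ := le_add_of_nonneg_right zero_le_one

/-- scaling estimate for Gaussian Vandermonde moments.
`|∫_{[-η,η]^n} Δ_n(t)² ∏ t_l^{α_l} e^{-N a t_l²} dt| ≤ C·N^{-(n²+|α|)/2}` for all
`N ≥ 1`. -/
theorem gaussian_vandermonde_moment_estimate
    (n : ℕ) (hn : 1 ≤ n) (a η : ℝ) (ha : 0 < a) (hη : 0 < η) (α : Fin n → ℕ) :
    ∃ C > (0 : ℝ), ∀ N : ℝ, 1 ≤ N →
      |∫ t in Set.univ.pi (fun _ : Fin n => Set.Icc (-η) η),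
          vandR t ^ 2 * ∏ l, (t l) ^ (α l) * Real.exp (-N * a * (t l) ^ 2)| ≤
        C * N ^ (-(((n ^ 2 : ℕ) : ℝ) + ((∑ l, α l : ℕ) : ℝ)) / 2) :=
  gaussian_vandermonde_moment_estimate_general n a η ha α
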